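/- Let v1 = (1, 0, 0), v2 = (0, 1, 0), v3 = (0, 0, 1), v4 = (1/√3, 1/√3, 1/√3) in ℝ^3. There is no unit vector ξ ∈ ℝ^3 such that ⟨ξ, vi⟩^2 = ⟨ξ, vj⟩^2 for all i, j ∈ {1, 2, 3, 4}. -/

import Mathlib

/-! If `ξ = (a, b, c)` had all four projections of equal square, then `b = ±a`, `c = ±a`, so
`(a + b + c)²` is `9a²` or `a²`; it must also equal `3 ⟨ξ, v₄⟩² = 3a²`, which forces `a = 0`
and hence `ξ = 0`, not a unit vector. -/

open scoped RealInnerProductSpace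

/-- The four directions `v1 = e1`, `v2 = e2`, `v3 = e3`, `v4 = (1/√3)(1,1,1)` in `ℝ³`. -/
noncomputable def dirs3 : Fin 4 → EuclideanSpace ℝ (Fin 3) :=
  ![(WithLp.equiv 2 (Fin 3 → ℝ)).symm ![1, 0, 0],
    (WithLp.equiv 2 (Fin 3 → ℝ)).symm ![0, 1, 0],
    (WithLp.equiv 2 (Fin 3 → ℝ)).symm ![0, 0, 1],
    (WithLp.equiv 2 (Fin 3 → ℝ)).symm
      ![1 / Real.sqrt 3, 1 / Real.sqrt 3, 1 / Real.sqrt 3]]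

theorem eq_zero_of_sq_eq_of_sq_add_add_eq {K : Type*} [Field K] [CharZero K] {a b c : K}
    (hab : a ^ 2 = b ^ 2) (hac : a ^ 2 = c ^ 2) (habc : (a + b + c) ^ 2 = 3 * a ^ 2) :
    a = 0 := by
  rcases sq_eq_sq_iff_eq_or_eq_neg.mp hab.symm with hb | hb <;>
    rcases sq_eq_sq_iff_eq_or_eq_neg.mp hac.symm with hc | hc <;>
    rw [hb, hc] at habc
  · have : 6 * a ^ 2 = 0 := by linear_combination habc
    simpa using this
  all_goals
    have : 2 * a ^ 2 = 0 := by linear_combination -habc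
    simpa using this

theorem inner_withLp_symm_fin_three (ξ : EuclideanSpace ℝ (Fin 3)) (x y z : ℝ) :
    ⟪ξ, (WithLp.equiv 2 (Fin 3 → ℝ)).symm ![x, y, z]⟫ = ξ 0 * x + ξ 1 * y + ξ 2 * z := by
  simp [PiLp.inner_apply, Fin.sum_univ_three, mul_comm]

section dirs3

variable (ξ : EuclideanSpace ℝ (Fin 3))

theorem inner_dirs3_zero : ⟪ξ, dirs3 0⟫ = ξ 0 := by
  simp only [dirs3, Matrix.cons_val, inner_withLp_symm_fin_three]
  ring

theorem inner_dirs3_one : ⟪ξ, dirs3 1⟫ = ξ 1 := by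
  simp only [dirs3, Matrix.cons_val, inner_withLp_symm_fin_three]
  ring

theorem inner_dirs3_two : ⟪ξ, dirs3 2⟫ = ξ 2 := by
  simp only [dirs3, Matrix.cons_val, inner_withLp_symm_fin_three]
  ring

theorem sq_inner_dirs3_three : ⟪ξ, dirs3 3⟫ ^ 2 = (ξ 0 + ξ 1 + ξ 2) ^ 2 / 3 := by
  have hsqrt : Real.sqrt 3 ^ 2 = 3 := Real.sq_sqrt (by norm_num)
  simp only [dirs3, Matrix.cons_val, inner_withLp_symm_fin_three]
  rw [← add_mul, ← add_mul, mul_one_div, div_pow, hsqrt]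

end dirs3

/-- In dimension `3`, there is no unit vector `ξ` with `⟨ξ, v_i⟩² = ⟨ξ, v_j⟩²`
for all pairs among `e1, e2, e3` and `(1/√3)(1,1,1)`. -/
theorem stmt6 :
    ¬ ∃ ξ : EuclideanSpace ℝ (Fin 3), ‖ξ‖ = 1 ∧
        ∀ i j : Fin 4, ⟪ξ, dirs3 i⟫ ^ 2 = ⟪ξ, dirs3 j⟫ ^ 2 := by
  rintro ⟨ξ, hunit, hsq⟩
  have h01 := hsq 0 1
  have h02 := hsq 0 2
  have h03 := hsq 3 0
  rw [inner_dirs3_zero, inner_dirs3_one] at h01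
  rw [inner_dirs3_zero, inner_dirs3_two] at h02
  rw [sq_inner_dirs3_three, inner_dirs3_zero, div_eq_iff three_ne_zero, mul_comm] at h03
  have h0 : ξ 0 = 0 := eq_zero_of_sq_eq_of_sq_add_add_eq h01 h02 h03
  have hξ : ξ = 0 := by
    ext i
    fin_cases i
    · exact h0
    · simpa [h0] using h01.symm
    · simpa [h0] using h02.symm
  simp [hξ] at hunit
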